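/- arXiv:2403.09440 — 5 statements merged into one kernel-verified Lean document; each statement's English description precedes it below -/
import Mathlib

section
/- Let f, g ∈ ℚ[T] be coprime polynomials with g nonzero. If there exist infinitely many integers t such that f(t)/g(t) ∈ ℤ, then g is a constant polynomial. -/
/-!
Write `a f + b g = 1`. At an integer `t` with `f(t) = k g(t)`, `k ∈ ℤ`, this gives
`g(t) (k a(t) + b(t)) = 1`; after clearing the denominators of `a`, `b`, `g`, the integer `c g(t)`
divides a fixed nonzero integer `N`. So `c g` takes only finitely many values on an infinite set,
and a polynomial doing so is constant.
-/

open Polynomial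

lemma Int.finite_setOf_dvd {N : ℤ} (hN : N ≠ 0) : {d : ℤ | d ∣ N}.Finite :=
  (Set.finite_Icc (-|N|) |N|).subset fun _ hd =>
    abs_le.mp <| by
      simpa only [← Int.natCast_natAbs, Nat.cast_le] using Int.natAbs_le_of_dvd_ne_zero hd hN

namespace Polynomial

theorem natDegree_eq_zero_of_finite_image {R : Type*} [CommRing R] [IsDomain R] {p : R[X]}
    {s : Set R} (hs : s.Infinite) (hp : ((fun x => p.eval x) '' s).Finite) :
    p.natDegree = 0 := by
  by_contra hdeg
  have hcover : s ⊆ ⋃ d ∈ (fun x => p.eval x) '' s, {x | p.eval x = d} :=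
    fun x hx => Set.mem_biUnion (Set.mem_image_of_mem _ hx) rfl
  refine hs ((hp.biUnion fun d _ => ?_).subset hcover)
  by_contra hfiber
  exact hdeg <| by
    rw [eq_of_infinite_eval_eq p (C d) (by simpa using hfiber), natDegree_C]

theorem exists_mul_eval_eq_algebraMap {R S : Type*} [CommRing R] [CommRing S] [Algebra R S]
    (M : Submonoid R) [IsLocalization M S] (p : S[X]) :
    ∃ c ∈ M, ∀ t : R, ∃ m : R, algebraMap R S c * p.eval (algebraMap R S t) = algebraMap R S m := by
  obtain ⟨c, hc, hp⟩ := IsLocalization.integerNormalization_spec M p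
  refine ⟨c, hc, fun t => ⟨(IsLocalization.integerNormalization M p).eval t, ?_⟩⟩
  rw [← eval₂_at_apply, ← eval_map, hp, eval_smul, Algebra.smul_def]

theorem exists_int_mul_eval_intCast_eq (p : ℚ[X]) :
    ∃ c : ℤ, c ≠ 0 ∧ ∀ t : ℤ, ∃ m : ℤ, c * p.eval (t : ℚ) = m := by
  obtain ⟨c, hc, hp⟩ := exists_mul_eval_eq_algebraMap (nonZeroDivisors ℤ) p
  exact ⟨c, nonZeroDivisors.ne_zero hc, by simpa only [algebraMap_int_eq, eq_intCast] using hp⟩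

end Polynomial

theorem IsCoprime.exists_int_mul_eval_dvd {f g : ℚ[X]} (hco : IsCoprime f g) :
    ∃ c N : ℤ, c ≠ 0 ∧ N ≠ 0 ∧ ∀ t k : ℤ, f.eval (t : ℚ) = k * g.eval (t : ℚ) →
      ∃ m : ℤ, c * g.eval (t : ℚ) = m ∧ m ∣ N := by
  obtain ⟨a, b, hab⟩ := hco
  obtain ⟨ca, hca, hA⟩ := a.exists_int_mul_eval_intCast_eq
  obtain ⟨cb, hcb, hB⟩ := b.exists_int_mul_eval_intCast_eq
  obtain ⟨cg, hcg, hG⟩ := g.exists_int_mul_eval_intCast_eq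
  refine ⟨cg, ca * cb * cg, hcg, by positivity, fun t k hf => ?_⟩
  obtain ⟨At, hAt⟩ := hA t
  obtain ⟨Bt, hBt⟩ := hB t
  obtain ⟨Gt, hGt⟩ := hG t
  refine ⟨Gt, hGt, k * cb * At + ca * Bt, ?_⟩
  have hbezout : a.eval (t : ℚ) * f.eval (t : ℚ) + b.eval (t : ℚ) * g.eval (t : ℚ) = 1 := by
    simpa using congrArg (eval (t : ℚ)) hab
  have : ((ca * cb * cg : ℤ) : ℚ) = Gt * (k * cb * At + ca * Bt) := by
    rw [← hAt, ← hBt, ← hGt]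
    push_cast
    linear_combination (-((ca : ℚ) * cb * cg)) * hbezout + ((ca : ℚ) * cb * cg * a.eval (t : ℚ)) * hf
  exact_mod_cast this

theorem stmt_0_general (f g : Polynomial ℚ) (hco : IsCoprime f g)
    (h : {t : ℤ | Polynomial.eval (t : ℚ) g ≠ 0 ∧
        ∃ k : ℤ, Polynomial.eval (t : ℚ) f / Polynomial.eval (t : ℚ) g = (k : ℚ)}.Infinite) :
    g.natDegree = 0 := by
  obtain ⟨c, N, hc, hN, hdvd⟩ := hco.exists_int_mul_eval_dvd
  have hc' : (c : ℚ) ≠ 0 := Int.cast_ne_zero.mpr hc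
  rw [← natDegree_C_mul hc']
  refine natDegree_eq_zero_of_finite_image (h.image Int.cast_injective.injOn)
    (((Int.finite_setOf_dvd hN).image ((↑) : ℤ → ℚ)).subset ?_)
  rintro _ ⟨_, ⟨t, ⟨hgt, k, hk⟩, rfl⟩, rfl⟩
  obtain ⟨m, hm, hmN⟩ := hdvd t k ((div_eq_iff hgt).mp hk)
  exact ⟨m, hmN, by simp [hm]⟩

theorem stmt_0 (f g : Polynomial ℚ) (hco : IsCoprime f g) (hg : g ≠ 0)
    (h : {t : ℤ | Polynomial.eval (t : ℚ) g ≠ 0 ∧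
        ∃ k : ℤ, Polynomial.eval (t : ℚ) f / Polynomial.eval (t : ℚ) g = (k : ℚ)}.Infinite) :
    g.natDegree = 0 :=
  stmt_0_general f g hco h
end

section
/- Let A be a nonzero rational number, ℓ an odd positive integer, and x, y ∈ ℚ[t] polynomials that take integer values at infinitely many positive integers and infinitely many negative integers. If F ∈ ℚ[X,Y] satisfies F(x(t), y(t)) = (1/A)·t^ℓ for all t, then F takes a negative value at some integer point, i.e., there exist a, b ∈ ℤ with F(a,b) < 0. In particular the image F(ℤ×ℤ) is not contained in ℕ. -/
lemma exists_pow_div_neg_of_odd {A : ℚ} (hA : A ≠ 0) {ℓ : ℕ} (hodd : Odd ℓ) {P : ℚ → Prop}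
    (hpos : ∃ t, 0 < t ∧ P t) (hneg : ∃ t, t < 0 ∧ P t) :
    ∃ t, P t ∧ t ^ ℓ / A < 0 := by
  rcases hA.lt_or_gt with hA | hA
  · obtain ⟨t, ht, hPt⟩ := hpos
    exact ⟨t, hPt, div_neg_of_pos_of_neg (pow_pos ht ℓ) hA⟩
  · obtain ⟨t, ht, hPt⟩ := hneg
    exact ⟨t, hPt, div_neg_of_neg_of_pos (hodd.pow_neg ht) hA⟩

theorem stmt_4_general (A : ℚ) (hA : A ≠ 0) (ℓ : ℕ) (hodd : Odd ℓ)
    (x y : Polynomial ℚ)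
    (hpos : {t : ℤ | 0 < t ∧ (∃ a : ℤ, Polynomial.eval (t : ℚ) x = (a : ℚ)) ∧
        (∃ b : ℤ, Polynomial.eval (t : ℚ) y = (b : ℚ))}.Infinite)
    (hneg : {t : ℤ | t < 0 ∧ (∃ a : ℤ, Polynomial.eval (t : ℚ) x = (a : ℚ)) ∧
        (∃ b : ℤ, Polynomial.eval (t : ℚ) y = (b : ℚ))}.Infinite)
    (F : MvPolynomial (Fin 2) ℚ)
    (hF : ∀ t : ℚ, MvPolynomial.eval ![Polynomial.eval t x, Polynomial.eval t y] F = t ^ ℓ / A) :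
    (∃ a b : ℤ, MvPolynomial.eval ![(a : ℚ), (b : ℚ)] F < 0) ∧
      ¬ ({q : ℚ | ∃ a b : ℤ, MvPolynomial.eval ![(a : ℚ), (b : ℚ)] F = q} ⊆
          {q : ℚ | ∃ m : ℕ, q = (m : ℚ)}) := by
  obtain ⟨tp, htp, hxp, hyp⟩ := hpos.nonempty
  obtain ⟨tn, htn, hxn, hyn⟩ := hneg.nonempty
  obtain ⟨t, ⟨⟨a, ha⟩, ⟨b, hb⟩⟩, ht⟩ := exists_pow_div_neg_of_odd hA hodd
    (P := fun t : ℚ ↦ (∃ a : ℤ, x.eval t = a) ∧ ∃ b : ℤ, y.eval t = b)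
    ⟨(tp : ℚ), by exact_mod_cast htp, hxp, hyp⟩ ⟨(tn : ℚ), by exact_mod_cast htn, hxn, hyn⟩
  have hneg_value : MvPolynomial.eval ![(a : ℚ), (b : ℚ)] F < 0 := by
    rwa [← ha, ← hb, hF]
  refine ⟨⟨a, b, hneg_value⟩, fun hsub => ?_⟩
  obtain ⟨m, hm⟩ := hsub ⟨a, b, rfl⟩
  exact hneg_value.not_ge (hm ▸ m.cast_nonneg)

theorem stmt_4 (A : ℚ) (hA : A ≠ 0) (ℓ : ℕ) (hodd : Odd ℓ) (hℓ : 1 ≤ ℓ)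
    (x y : Polynomial ℚ)
    (hpos : {t : ℤ | 0 < t ∧ (∃ a : ℤ, Polynomial.eval (t : ℚ) x = (a : ℚ)) ∧
        (∃ b : ℤ, Polynomial.eval (t : ℚ) y = (b : ℚ))}.Infinite)
    (hneg : {t : ℤ | t < 0 ∧ (∃ a : ℤ, Polynomial.eval (t : ℚ) x = (a : ℚ)) ∧
        (∃ b : ℤ, Polynomial.eval (t : ℚ) y = (b : ℚ))}.Infinite)
    (F : MvPolynomial (Fin 2) ℚ)
    (hF : ∀ t : ℚ, MvPolynomial.eval ![Polynomial.eval t x, Polynomial.eval t y] F = t ^ ℓ / A) :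
    (∃ a b : ℤ, MvPolynomial.eval ![(a : ℚ), (b : ℚ)] F < 0) ∧
      ¬ ({q : ℚ | ∃ a b : ℤ, MvPolynomial.eval ![(a : ℚ), (b : ℚ)] F = q} ⊆
          {q : ℚ | ∃ m : ℕ, q = (m : ℚ)}) :=
  stmt_4_general A hA ℓ hodd x y hpos hneg F hF
end

section
/- Let R ⊆ ℚ² be weakly approximating and p ∈ ℚ[X] a polynomial. Then the image of R under the map (x, y) ↦ (x, y + p(x)) is also weakly approximating. -/
def WeakApprox (R : Set (ℚ × ℚ)) : Prop :=
  ∀ (x₀ y₀ : ℚ) (N : ℕ), 1 ≤ N → ∃ p ∈ R,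
    (∃ k : ℤ, p.1 - x₀ = (N : ℚ) * k) ∧ (∃ k : ℤ, p.2 - y₀ = (N : ℚ) * k)

/-! Polynomials over `ℚ` are continuous for the topology whose basic open sets are the cosets
`x + Nℤ`. Hence, to hit `(x₀, y₀)` modulo `N` with the sheared set, pick a point of `R` congruent to
`(x₀, y₀ - p x₀)` modulo a multiple `N * M` of `N` fine enough that `p x ≡ p x₀ [PMOD N]`. -/

open AddCommGroup Polynomial

theorem AddCommGroup.ModEq.of_natCast_dvd {R : Type*} [Semiring R] {a b : R} {m n : ℕ}
    (hnm : n ∣ m) (h : a ≡ b [PMOD (m : R)]) : a ≡ b [PMOD (n : R)] := by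
  obtain ⟨k, rfl⟩ := hnm
  exact ModEq.of_nsmul (n := k) (by rwa [nsmul_eq_mul, ← Nat.cast_mul, mul_comm])

theorem AddCommGroup.ModEq.mul_right_of_mul_eq_intCast {R : Type*} [CommRing R] {a b c : R}
    {n e : ℕ} {z : ℤ} (h : a ≡ b [PMOD ((n * e : ℕ) : R)]) (hc : (e : R) * c = z) :
    a * c ≡ b * c [PMOD (n : R)] := by
  obtain ⟨m, hm⟩ := modEq_iff_zsmul'.1 h
  refine modEq_iff_zsmul'.2 ⟨m * z, ?_⟩
  rw [← sub_mul, hm, zsmul_eq_mul, zsmul_eq_mul, Int.cast_mul, ← hc]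
  push_cast
  ring

theorem Rat.exists_den_mul_eq_intCast_of_modEq {x x₀ : ℚ} {m : ℕ} (h : x ≡ x₀ [PMOD (m : ℚ)]) :
    ∃ z : ℤ, (x₀.den : ℚ) * x = z := by
  obtain ⟨k, hk⟩ := modEq_iff_eq_add_zsmul.1 h
  refine ⟨x₀.num - x₀.den * k * m, ?_⟩
  rw [Int.cast_sub, ← Rat.den_mul_eq_num, hk, zsmul_eq_mul]
  push_cast
  ring

/-- Continuity at `x₀` for the topology on `ℚ` whose basic neighbourhoods of a point `x` are the
cosets `x + Nℤ`, `N ≥ 1`. -/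
def ModContinuousAt (f : ℚ → ℚ) (x₀ : ℚ) : Prop :=
  ∀ N : ℕ, 0 < N → ∃ M : ℕ, 0 < M ∧ ∀ x, x ≡ x₀ [PMOD (M : ℚ)] → f x ≡ f x₀ [PMOD (N : ℚ)]

section ModContinuousAt

variable {f g : ℚ → ℚ} {x₀ : ℚ}

theorem modContinuousAt_const (c : ℚ) : ModContinuousAt (fun _ => c) x₀ :=
  fun _ _ => ⟨1, one_pos, fun _ _ => modEq_rfl⟩

theorem ModContinuousAt.add (hf : ModContinuousAt f x₀) (hg : ModContinuousAt g x₀) :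
    ModContinuousAt (fun x => f x + g x) x₀ := by
  intro N hN
  obtain ⟨M₁, hM₁, hf⟩ := hf N hN
  obtain ⟨M₂, hM₂, hg⟩ := hg N hN
  exact ⟨M₁ * M₂, by positivity, fun x hx =>
    (hf x (hx.of_natCast_dvd (dvd_mul_right _ _))).add
      (hg x (hx.of_natCast_dvd (dvd_mul_left _ _)))⟩

/-- Write `f x * x - f x₀ * x₀ = (f x - f x₀) * x + f x₀ * (x - x₀)`: near `x₀` the denominator of
`x` divides that of `x₀`, so both terms lie in `Nℤ` once the modulus absorbs these denominators. -/
theorem ModContinuousAt.mul_id (hf : ModContinuousAt f x₀) :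
    ModContinuousAt (fun x => f x * x) x₀ := by
  intro N hN
  obtain ⟨M, hM, hf⟩ := hf (N * x₀.den) (by positivity)
  refine ⟨M * (N * (f x₀).den), by positivity, fun x hx => ?_⟩
  obtain ⟨z, hz⟩ := Rat.exists_den_mul_eq_intCast_of_modEq hx
  have hfx : f x * x ≡ f x₀ * x [PMOD (N : ℚ)] :=
    (hf x (hx.of_natCast_dvd (dvd_mul_right _ _))).mul_right_of_mul_eq_intCast hz
  have hx₀ : x * f x₀ ≡ x₀ * f x₀ [PMOD (N : ℚ)] :=
    (hx.of_natCast_dvd (dvd_mul_left _ _)).mul_right_of_mul_eq_intCast (Rat.den_mul_eq_num _)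
  exact hfx.trans (by simpa only [mul_comm] using hx₀)

end ModContinuousAt

theorem Polynomial.modContinuousAt_eval (p : ℚ[X]) (x₀ : ℚ) :
    ModContinuousAt (fun x => p.eval x) x₀ := by
  induction p using Polynomial.induction_on with
  | C a => simpa using modContinuousAt_const a
  | add p q hp hq => simpa using hp.add hq
  | monomial n a h => simpa [pow_succ, mul_assoc] using h.mul_id

theorem exists_intCast_sub_eq_mul_iff_modEq (a b : ℚ) (N : ℕ) :
    (∃ k : ℤ, a - b = (N : ℚ) * k) ↔ a ≡ b [PMOD (N : ℚ)] := by
  simp only [modEq_comm (a := a), modEq_iff_zsmul', zsmul_eq_mul, mul_comm]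

theorem weakApprox_iff_modEq (R : Set (ℚ × ℚ)) :
    WeakApprox R ↔ ∀ (x₀ y₀ : ℚ) (N : ℕ), 1 ≤ N → ∃ q ∈ R,
      q.1 ≡ x₀ [PMOD (N : ℚ)] ∧ q.2 ≡ y₀ [PMOD (N : ℚ)] := by
  simp only [WeakApprox, exists_intCast_sub_eq_mul_iff_modEq]

theorem stmt_7 (R : Set (ℚ × ℚ)) (hR : WeakApprox R) (p : Polynomial ℚ) :
    WeakApprox ((fun q : ℚ × ℚ => (q.1, q.2 + Polynomial.eval q.1 p)) '' R) := by
  rw [weakApprox_iff_modEq] at hR ⊢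
  intro x₀ y₀ N hN
  obtain ⟨M, hM, hp⟩ := p.modContinuousAt_eval x₀ N hN
  obtain ⟨q, hqR, hx, hy⟩ :=
    hR x₀ (y₀ - p.eval x₀) (N * M) (Nat.one_le_iff_ne_zero.2 (by positivity))
  refine ⟨_, ⟨q, hqR, rfl⟩, hx.of_natCast_dvd (dvd_mul_right N M), ?_⟩
  simpa using (hy.of_natCast_dvd (dvd_mul_right N M)).add
    (hp q.1 (hx.of_natCast_dvd (dvd_mul_left M N)))
end

section
/- Let x₀ = a/b be a rational number in lowest terms (b ≥ 1), n ≥ 1 an integer, N ≥ 1 an integer, and x ∈ ℚ with x − x₀ ∈ b^(n−1)·N·ℤ. Then xⁿ − x₀ⁿ ∈ N·ℤ. -/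
/-!
Write x₀ = a/b and x - x₀ = b^(n-1) N k. Then
xⁿ - x₀ⁿ = (x - x₀) ∑ xⁱ x₀^(n-1-i) = N k ∑ (b x)ⁱ (b x₀)^(n-1-i),
where b·x₀ and b·x = b·x₀ + bⁿ N k are integers.
-/

open Finset

theorem mul_pow_pred_geom_sum₂ {R : Type*} [CommSemiring R] (d x y : R) (n : ℕ) :
    d ^ (n - 1) * ∑ i ∈ range n, x ^ i * y ^ (n - 1 - i) =
      ∑ i ∈ range n, (d * x) ^ i * (d * y) ^ (n - 1 - i) := by
  rw [mul_sum]
  refine sum_congr rfl fun i hi => ?_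
  have hi : i ≤ n - 1 := Nat.le_sub_one_of_lt (mem_range.mp hi)
  rw [← pow_mul_pow_sub d hi, mul_pow, mul_pow]
  ring

theorem Subring.exists_mem_pow_sub_pow_eq_mul {R : Type*} [CommRing R] (S : Subring R)
    {d x y m : R} (n : ℕ) (hx : d * x ∈ S) (hy : d * y ∈ S) (h : x - y = d ^ (n - 1) * m) :
    ∃ s ∈ S, x ^ n - y ^ n = m * s := by
  refine ⟨∑ i ∈ range n, (d * x) ^ i * (d * y) ^ (n - 1 - i),
    sum_mem fun i _ => mul_mem (pow_mem hx i) (pow_mem hy _), ?_⟩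
  rw [← mul_pow_pred_geom_sum₂, ← geom_sum₂_mul, h]
  ring

theorem Subring.mul_div_mem {K : Type*} [Field K] (S : Subring K) {a : K} (ha : a ∈ S) (d : K) :
    d * (a / d) ∈ S := by
  rcases eq_or_ne d 0 with rfl | hd
  · simp [S.zero_mem]
  · rwa [mul_div_cancel₀ a hd]

theorem stmt_9_general (a : ℤ) (b : ℕ) (n N : ℕ) (x : ℚ)
    (hx : ∃ k : ℤ, x - (a : ℚ) / (b : ℚ) = ((b : ℚ) ^ (n - 1) * (N : ℚ)) * k) :
    ∃ k : ℤ, x ^ n - ((a : ℚ) / (b : ℚ)) ^ n = (N : ℚ) * k := by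
  obtain ⟨k, hk⟩ := hx
  have hx₀ : (b : ℚ) * (a / b) ∈ (⊥ : Subring ℚ) :=
    Subring.mul_div_mem _ (intCast_mem _ a) (b : ℚ)
  have hbx : (b : ℚ) * x ∈ (⊥ : Subring ℚ) := by
    rw [show (b : ℚ) * x = b * (x - a / b) + b * (a / b) by ring, hk]
    exact add_mem (mul_mem (natCast_mem _ b)
      (mul_mem (mul_mem (pow_mem (natCast_mem _ b) _) (natCast_mem _ N)) (intCast_mem _ k))) hx₀
  obtain ⟨s, hs, hpow⟩ :=
    (⊥ : Subring ℚ).exists_mem_pow_sub_pow_eq_mul (m := N * k) n hbx hx₀ (by rw [hk]; ring)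
  obtain ⟨j, rfl⟩ := Subring.mem_bot.mp hs
  exact ⟨k * j, by rw [hpow]; push_cast; ring⟩

theorem stmt_9 (a : ℤ) (b : ℕ) (hb : 1 ≤ b) (hcop : a.natAbs.gcd b = 1)
    (n N : ℕ) (hn : 1 ≤ n) (hN : 1 ≤ N) (x : ℚ)
    (hx : ∃ k : ℤ, x - (a : ℚ) / (b : ℚ) = ((b : ℚ) ^ (n - 1) * (N : ℚ)) * k) :
    ∃ k : ℤ, x ^ n - ((a : ℚ) / (b : ℚ)) ^ n = (N : ℚ) * k :=
  stmt_9_general a b n N x hx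
end

section
/- Let f : ℚ² → ℚ² be given by f(x,y) = (x, y + p(x)) for a rational polynomial p, composed with any finite sequence of maps of the forms (x,y) ↦ (αx, y) (α ∈ ℚ, α ≠ 0), (x,y) ↦ (y, x), (x,y) ↦ (x, y + q(x)), (x,y) ↦ (x + r(y), y) with q, r ∈ ℚ[T]. If R ⊆ ℚ² is weakly approximating, then so is f(R). -/
def Elementary (g : ℚ × ℚ → ℚ × ℚ) : Prop :=
  (∃ α : ℚ, α ≠ 0 ∧ g = fun p => (α * p.1, p.2)) ∨
  (g = fun p => (p.2, p.1)) ∨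
  (∃ q : Polynomial ℚ, g = fun p => (p.1, p.2 + Polynomial.eval p.1 q)) ∨
  (∃ r : Polynomial ℚ, g = fun p => (p.1 + Polynomial.eval p.2 r, p.2))

open Polynomial AddCommGroup

/-!
Each elementary map sends the points of `R` in a suitable congruence class modulo some `M`
into a prescribed congruence class modulo `N`. For the shears this is because, for
`q ∈ ℚ[X]`, `q (x₀ + h) - q x₀ = h * s h` with `s ∈ ℚ[X]`, and `D * s` takes integer values at
integers for a suitable `D`; so `h ∈ N D ℤ` gives `q (x₀ + h) - q x₀ ∈ N ℤ`. Scaling by `α` is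
handled with `M = N * α.den`.
-/

theorem exists_int_sub_eq_mul_iff_modEq {R : Type*} [CommRing R] {a b N : R} :
    (∃ k : ℤ, a - b = N * k) ↔ b ≡ a [PMOD N] := by
  simp only [modEq_iff_zsmul', zsmul_eq_mul, mul_comm N]

theorem weakApprox_iff {R : Set (ℚ × ℚ)} :
    WeakApprox R ↔ ∀ (x₀ y₀ : ℚ) (N : ℕ), 1 ≤ N →
      ∃ p ∈ R, x₀ ≡ p.1 [PMOD (N : ℚ)] ∧ y₀ ≡ p.2 [PMOD (N : ℚ)] := by
  simp only [WeakApprox, exists_int_sub_eq_mul_iff_modEq]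

theorem AddCommGroup.ModEq.of_natCast_mul {R : Type*} [CommRing R] {a b : R} {N D : ℕ}
    (h : a ≡ b [PMOD ((N * D : ℕ) : R)]) : a ≡ b [PMOD (N : R)] := by
  rw [Nat.cast_mul, mul_comm, ← nsmul_eq_mul] at h
  exact h.of_nsmul

theorem Polynomial.exists_nat_mul_eval_intCast_eq_intCast (r : ℚ[X]) :
    ∃ D : ℕ, 0 < D ∧ ∀ m : ℤ, ∃ w : ℤ, D * r.eval (m : ℚ) = w := by
  induction r using Polynomial.induction_on' with
  | add r s hr hs =>
    obtain ⟨D, hD, hr⟩ := hr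
    obtain ⟨E, hE, hs⟩ := hs
    refine ⟨D * E, by positivity, fun m => ?_⟩
    obtain ⟨a, ha⟩ := hr m
    obtain ⟨b, hb⟩ := hs m
    exact ⟨E * a + D * b, by push_cast [eval_add]; linear_combination E * ha + D * hb⟩
  | monomial n c =>
    refine ⟨c.den, c.den_pos, fun m => ⟨c.num * m ^ n, ?_⟩⟩
    rw [eval_monomial, ← mul_assoc, Rat.den_mul_eq_num]
    push_cast
    rfl

theorem Polynomial.exists_eval_modEq_eval (q : ℚ[X]) (x₀ : ℚ) (N : ℕ) :
    ∃ D : ℕ, 0 < D ∧ ∀ x : ℚ, x₀ ≡ x [PMOD ((N * D : ℕ) : ℚ)] →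
      q.eval x₀ ≡ q.eval x [PMOD (N : ℚ)] := by
  obtain ⟨r, hr⟩ := X_sub_C_dvd_sub_C_eval (p := q) (a := x₀)
  obtain ⟨D, hD, hint⟩ := exists_nat_mul_eval_intCast_eq_intCast (r.comp (C x₀ + X))
  refine ⟨D, hD, fun x hx => ?_⟩
  obtain ⟨z, hz⟩ := modEq_iff_eq_add_zsmul.1 hx
  have hsub : x - x₀ = ((z * N * D : ℤ) : ℚ) := by
    rw [hz, zsmul_eq_mul]
    push_cast
    ring
  obtain ⟨w, hw⟩ := hint (z * N * D)
  rw [eval_comp, eval_add, eval_C, eval_X, ← hsub, add_sub_cancel] at hw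
  have hfactor : q.eval x - q.eval x₀ = (x - x₀) * r.eval x := by
    simpa using congr_arg (eval x) hr
  refine modEq_iff_zsmul'.2 ⟨z * w, ?_⟩
  rw [hfactor, hsub, zsmul_eq_mul]
  push_cast
  linear_combination (z : ℚ) * N * hw

namespace WeakApprox

variable {R : Set (ℚ × ℚ)}

theorem image_swap (hR : WeakApprox R) : WeakApprox ((fun p => (p.2, p.1)) '' R) := by
  intro x₀ y₀ N hN
  obtain ⟨⟨x, y⟩, hmem, hx, hy⟩ := hR y₀ x₀ N hN
  exact ⟨(y, x), Set.mem_image_of_mem _ hmem, hy, hx⟩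

theorem image_scaleFst {α : ℚ} (hα : α ≠ 0) (hR : WeakApprox R) :
    WeakApprox ((fun p => (α * p.1, p.2)) '' R) := by
  rw [weakApprox_iff] at hR ⊢
  intro x₀ y₀ N hN
  obtain ⟨⟨x, y⟩, hmem, hx, hy⟩ := hR (x₀ / α) y₀ (N * α.den) (Nat.mul_pos hN α.den_pos)
  have hmod : ((N * α.den : ℕ) : ℚ) = α.num • ((N : ℚ) / α) := by
    rw [zsmul_eq_mul, ← Rat.mul_den_eq_num]
    field_simp
    push_cast
    ring
  refine ⟨(α * x, y), Set.mem_image_of_mem _ hmem, ?_, hy.of_natCast_mul⟩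
  rw [← mul_div_cancel₀ x₀ hα]
  exact (mul_modEq_mul_left hα).2 (hmod ▸ hx).of_zsmul

theorem image_shearSnd (q : ℚ[X]) (hR : WeakApprox R) :
    WeakApprox ((fun p => (p.1, p.2 + q.eval p.1)) '' R) := by
  rw [weakApprox_iff] at hR ⊢
  intro x₀ y₀ N hN
  obtain ⟨D, hD, hq⟩ := q.exists_eval_modEq_eval x₀ N
  obtain ⟨⟨x, y⟩, hmem, hx, hy⟩ := hR x₀ (y₀ - q.eval x₀) (N * D) (Nat.mul_pos hN hD)
  refine ⟨(x, y + q.eval x), Set.mem_image_of_mem _ hmem, hx.of_natCast_mul, ?_⟩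
  simpa using hy.of_natCast_mul.add (hq x hx)

theorem image_shearFst (r : ℚ[X]) (hR : WeakApprox R) :
    WeakApprox ((fun p => (p.1 + r.eval p.2, p.2)) '' R) := by
  have h := (hR.image_swap.image_shearSnd r).image_swap
  rwa [Set.image_image, Set.image_image] at h

theorem image_of_elementary {g : ℚ × ℚ → ℚ × ℚ} (hg : Elementary g) (hR : WeakApprox R) :
    WeakApprox (g '' R) := by
  rcases hg with ⟨α, hα, rfl⟩ | rfl | ⟨q, rfl⟩ | ⟨r, rfl⟩
  exacts [hR.image_scaleFst hα, hR.image_swap, hR.image_shearSnd q, hR.image_shearFst r]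

theorem image_foldl_comp {L : List (ℚ × ℚ → ℚ × ℚ)} (hL : ∀ g ∈ L, Elementary g)
    {f₀ : ℚ × ℚ → ℚ × ℚ} (h : WeakApprox (f₀ '' R)) :
    WeakApprox (L.foldl (fun acc g => g ∘ acc) f₀ '' R) := by
  induction L generalizing f₀ with
  | nil => exact h
  | cons g L ih =>
    refine ih (fun g' hg' => hL g' (List.mem_cons_of_mem _ hg')) ?_
    rw [Set.image_comp]
    exact image_of_elementary (hL g List.mem_cons_self) h

end WeakApprox

theorem stmt_18 (p : Polynomial ℚ) (L : List (ℚ × ℚ → ℚ × ℚ))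
    (hL : ∀ g ∈ L, Elementary g)
    (f : ℚ × ℚ → ℚ × ℚ)
    (hf : f = L.foldl (fun acc g => g ∘ acc)
      (fun q : ℚ × ℚ => (q.1, q.2 + Polynomial.eval q.1 p)))
    (R : Set (ℚ × ℚ)) (hR : WeakApprox R) :
    WeakApprox (f '' R) := by
  subst hf
  exact WeakApprox.image_foldl_comp hL (hR.image_shearSnd p)
end
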